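/- Let 0 < t1 < 1/4 and 0 < t0 ≤ t_{0,crit}(t1). Then the quintic p̃ has no complex root of multiplicity three or higher: there is no x ∈ ℂ with p̃(x) = p̃'(x) = p̃''(x) = 0. -/

import Mathlib

/-!
Eliminating the parameters from `p̃ = p̃' = p̃'' = 0` leaves `x^3 (x - 1)^2 (4x - 1)^4 = 0`, so a
triple root can only sit at `x = 0`, `1/4` or `1`. At each of these points the three equations
are polynomial in `(t0, t1)` alone and pin the parameters down to one of the five points
`(0, 1/4)`, `(0, -3/4)`, `(1/8, 0)`, `(-7/8, -1)`, `(-10, -27/4)`, none of which has `t0 > 0` and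
`t1 > 0`.
-/

noncomputable section

/-- The quintic `p̃` of the paper, as a complex function of `x` (with real
parameters `t0`, `t1`). -/
def ptildeC (t0 t1 : ℝ) (x : ℂ) : ℂ :=
  128*x^5 - 124*x^4 + (64*(t0:ℂ) - 16*(t1:ℂ) + 36)*x^3
    + (16*(t1:ℂ)^2 + 8*(t1:ℂ) - 28*(t0:ℂ) - 3)*x^2 + (t0:ℂ)*(2 - 8*(t1:ℂ))*x + (t0:ℂ)^2

/-- The cubic polynomial `p1` whose greatest real root is `t_{0,crit}(t1)`. -/
def p1 (t1 s : ℝ) : ℝ :=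
  8192*s^3 + 192*(64*t1 - 7)*s^2 - 48*(1 - 4*t1)^2*s + (108*t1 - 11)*(4*t1 - 1)^3

section Algebra

variable {R : Type*} [CommRing R]

def ptilde (a b x : R) : R :=
  128*x^5 - 124*x^4 + (64*a - 16*b + 36)*x^3 + (16*b^2 + 8*b - 28*a - 3)*x^2 + a*(2 - 8*b)*x + a^2

def ptildeDeriv (a b x : R) : R :=
  640*x^4 - 496*x^3 + 3*(64*a - 16*b + 36)*x^2 + 2*(16*b^2 + 8*b - 28*a - 3)*x + a*(2 - 8*b)

def ptildeDeriv2 (a b x : R) : R :=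
  2560*x^3 - 1488*x^2 + 6*(64*a - 16*b + 36)*x + 2*(16*b^2 + 8*b - 28*a - 3)

end Algebra

theorem ptildeC_eq_ptilde (t0 t1 : ℝ) : ptildeC t0 t1 = ptilde (t0 : ℂ) (t1 : ℂ) := rfl

section Calculus

variable {𝕜 : Type*} [NontriviallyNormedField 𝕜]

def IsTripleRoot (f : 𝕜 → 𝕜) (x : 𝕜) : Prop :=
  f x = 0 ∧ deriv f x = 0 ∧ deriv (deriv f) x = 0

theorem hasDerivAt_ptilde (a b x : 𝕜) : HasDerivAt (ptilde a b) (ptildeDeriv a b x) x := by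
  have h := ((((((hasDerivAt_pow 5 x).const_mul 128).sub ((hasDerivAt_pow 4 x).const_mul 124)).add
    ((hasDerivAt_pow 3 x).const_mul (64*a - 16*b + 36))).add
    ((hasDerivAt_pow 2 x).const_mul (16*b^2 + 8*b - 28*a - 3))).add
    ((hasDerivAt_id x).const_mul (a*(2 - 8*b)))).add_const (a^2)
  refine h.congr_deriv ?_
  norm_num [ptildeDeriv]
  ring

theorem hasDerivAt_ptildeDeriv (a b x : 𝕜) :
    HasDerivAt (ptildeDeriv a b) (ptildeDeriv2 a b x) x := by
  have h := (((((hasDerivAt_pow 4 x).const_mul 640).sub ((hasDerivAt_pow 3 x).const_mul 496)).add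
    ((hasDerivAt_pow 2 x).const_mul (3*(64*a - 16*b + 36)))).add
    ((hasDerivAt_id x).const_mul (2*(16*b^2 + 8*b - 28*a - 3)))).add_const (a*(2 - 8*b))
  refine h.congr_deriv ?_
  norm_num [ptildeDeriv2]
  ring

theorem isTripleRoot_ptilde_iff (a b x : 𝕜) : IsTripleRoot (ptilde a b) x ↔
    ptilde a b x = 0 ∧ ptildeDeriv a b x = 0 ∧ ptildeDeriv2 a b x = 0 := by
  have hderiv : deriv (ptilde a b) = ptildeDeriv a b :=
    funext fun y => (hasDerivAt_ptilde a b y).deriv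
  rw [IsTripleRoot, hderiv, (hasDerivAt_ptildeDeriv a b x).deriv]

end Calculus

section Elimination

variable {K : Type*} [Field K] [CharZero K] {a b x : K}

theorem eq_zero_or_eq_quarter_or_eq_one_of_ptilde (h0 : ptilde a b x = 0)
    (h1 : ptildeDeriv a b x = 0) (h2 : ptildeDeriv2 a b x = 0) : x = 0 ∨ x = 1/4 ∨ x = 1 := by
  unfold ptilde at h0
  unfold ptildeDeriv at h1
  unfold ptildeDeriv2 at h2
  -- Multipliers from a degree-bounded linear solve over `ℚ`.
  have key : x^3 * (x - 1)^2 * (4*x - 1)^4 = 0 := by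
    linear_combination (2*x^4 - 277/96*x^3 + 49/12*x^2*a - 23/16*x^2*b + 49/48*x*b^2
        + 167/192*x^2 - 77/64*x*a + 49/96*x*b - 49/144*a*b + 1/36*b^2 - 35/768*x - 1/144*b) * h0
      + (-469/120*x^4 - 73/20*x^3*a + 487/720*x^3*b - 143/240*x^2*b^2 + 31/15*x^3 + 11/10*x^2*a
        - 131/960*x^2*b - 7/24*x*a^2 + 119/288*x*a*b - 5/72*x*b^2 - 7/288*a*b^2 - 463/1920*x^2
        - 7/96*x*a - 7/288*x*b - 17/1152*a*b) * h1
      + (1763/1920*x^5 + 79/120*x^4*a - 61/720*x^4*b + 41/480*x^3*b^2 - 393/640*x^4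
        - 59/640*x^3*a - 61/1440*x^3*b + 7/48*x^2*a^2 - 289/2880*x^2*a*b + 1/18*x^2*b^2
        + 7/288*x*a*b^2 + 249/2560*x^3 - 29/1280*x^2*a + 1/36*x^2*b - 49/1536*x*a^2
        + 5/1152*x*a*b - 7/1152*a^2*b) * h2
  simp only [mul_eq_zero, ne_eq, OfNat.ofNat_ne_zero, not_false_eq_true, pow_eq_zero_iff,
    sub_eq_zero] at key
  rcases key with (hx | hx) | hx
  · exact .inl hx
  · exact .inr (.inr hx)
  · exact .inr (.inl (by linear_combination hx / 4))

theorem params_of_ptilde_zero (h0 : ptilde a b 0 = 0) (h2 : ptildeDeriv2 a b 0 = 0) :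
    a = 0 ∧ (b = 1/4 ∨ b = -3/4) := by
  unfold ptilde at h0
  unfold ptildeDeriv2 at h2
  obtain rfl : a = 0 := pow_eq_zero_iff two_ne_zero |>.mp (by linear_combination h0)
  have : (b - 1/4) * (b + 3/4) = 0 := by linear_combination h2 / 32
  rcases mul_eq_zero.mp this with h | h
  · exact ⟨rfl, .inl (by linear_combination h)⟩
  · exact ⟨rfl, .inr (by linear_combination h)⟩

theorem params_of_ptilde_quarter (h1 : ptildeDeriv a b (1/4) = 0)
    (h2 : ptildeDeriv2 a b (1/4) = 0) : a = 1/8 ∧ b = 0 ∨ a = -7/8 ∧ b = -1 := by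
  unfold ptildeDeriv at h1
  unfold ptildeDeriv2 at h2
  have : b^2 * (b + 1) = 0 := by linear_combination (b * h2 + 5 * h1) / 32
  rcases mul_eq_zero.mp this with h | h
  · obtain rfl : b = 0 := pow_eq_zero_iff two_ne_zero |>.mp h
    exact .inl ⟨by linear_combination h2 / 40, rfl⟩
  · obtain rfl : b = -1 := by linear_combination h
    exact .inr ⟨by linear_combination h2 / 40, rfl⟩

theorem params_of_ptilde_one (h0 : ptilde a b 1 = 0) (h1 : ptildeDeriv a b 1 = 0)
    (h2 : ptildeDeriv2 a b 1 = 0) : a = -10 ∧ b = -27/4 := by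
  unfold ptilde at h0
  unfold ptildeDeriv at h1
  unfold ptildeDeriv2 at h2
  constructor
  · linear_combination (-1/324*b + 23/432) * h0 + (-1/2592*a + 1/648*b - 103/2592) * h1
      + 1/72 * h2
  · linear_combination ((1/162*b + 59/216) * h0 + (1/1296*a - 5/648*b - 463/2592) * h1
      + (-1/864*a + 1/216*b + 41/864) * h2) / 4

theorem params_mem_of_ptilde (h0 : ptilde a b x = 0) (h1 : ptildeDeriv a b x = 0)
    (h2 : ptildeDeriv2 a b x = 0) :
    (a, b) ∈ ({(0, 1/4), (0, -3/4), (1/8, 0), (-7/8, -1), (-10, -27/4)} : Set (K × K)) := by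
  simp only [Set.mem_insert_iff, Set.mem_singleton_iff, Prod.mk.injEq]
  rcases eq_zero_or_eq_quarter_or_eq_one_of_ptilde h0 h1 h2 with rfl | rfl | rfl
  · obtain ⟨rfl, rfl | rfl⟩ := params_of_ptilde_zero h0 h2 <;> norm_num
  · obtain ⟨rfl, rfl⟩ | ⟨rfl, rfl⟩ := params_of_ptilde_quarter h1 h2 <;> norm_num
  · obtain ⟨rfl, rfl⟩ := params_of_ptilde_one h0 h1 h2
    norm_num

end Elimination

theorem ptilde_no_triple_root_general (t0 t1 : ℝ) (ht1 : 0 < t1)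
    (ht0 : 0 < t0) :
    ¬ ∃ x : ℂ, ptildeC t0 t1 x = 0 ∧ deriv (ptildeC t0 t1) x = 0 ∧
      deriv (deriv (ptildeC t0 t1)) x = 0 := by
  rintro ⟨x, hx⟩
  rw [← IsTripleRoot, ptildeC_eq_ptilde, isTripleRoot_ptilde_iff] at hx
  have h := params_mem_of_ptilde hx.1 hx.2.1 hx.2.2
  simp only [Set.mem_insert_iff, Set.mem_singleton_iff, Prod.mk.injEq, Complex.ext_iff] at h
  norm_num at h
  rcases h with ⟨h0, -⟩ | ⟨h0, -⟩ | ⟨-, h1⟩ | ⟨h0, -⟩ | ⟨h0, -⟩ <;> linarith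

/-- For `0 < t1 < 1/4` and `0 < t0 ≤ t_{0,crit}(t1)`, the quintic `p̃` has no complex
root of multiplicity three or higher. -/
theorem ptilde_no_triple_root (t0 t1 tc : ℝ) (ht1 : 0 < t1) (ht1' : t1 < 1/4)
    (htc : IsGreatest {s : ℝ | p1 t1 s = 0} tc)
    (ht0 : 0 < t0) (ht0' : t0 ≤ tc) :
    ¬ ∃ x : ℂ, ptildeC t0 t1 x = 0 ∧ deriv (ptildeC t0 t1) x = 0 ∧
      deriv (deriv (ptildeC t0 t1)) x = 0 :=
  ptilde_no_triple_root_general t0 t1 ht1 ht0
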